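/- For u0(x) = 1/(1+x^2) and u1 = μ·u0'' - u0·u0', the function (x - i)^3 · u1(x) tends to -1/4 - iμ as x → i in ℂ; that is, u1 has a pole of order 3 at x = i with leading coefficient -1/4 - iμ. -/

import Mathlib

/-!
Both derivatives of `u0 = 1/(1 + x^2)` are explicit rational functions, and after factoring
`1 + x^2 = (x - i)(x + i)` one finds `(x - i)^3 u1(x) = (μ(6x^2 - 2) + 2x)/(x + i)^3` away from
`±i`. The right-hand side is continuous at `i`, where it equals `(2i - 8μ)/(-8i) = -1/4 - iμ`.
-/

open Complex Filter

section OneDivOneAddSq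

variable {𝕜 : Type*} [NontriviallyNormedField 𝕜] {x : 𝕜}

theorem hasDerivAt_one_div_one_add_sq (hx : 1 + x ^ 2 ≠ 0) :
    HasDerivAt (fun x : 𝕜 => 1 / (1 + x ^ 2)) (-2 * x / (1 + x ^ 2) ^ 2) x := by
  have h : HasDerivAt (fun x : 𝕜 => 1 + x ^ 2) (2 * x) x := by
    simpa using (hasDerivAt_pow 2 x).const_add 1
  simp only [one_div]
  exact (h.fun_inv hx).congr_deriv (by ring)

theorem hasDerivAt_neg_two_mul_div_one_add_sq_sq (hx : 1 + x ^ 2 ≠ 0) :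
    HasDerivAt (fun x : 𝕜 => -2 * x / (1 + x ^ 2) ^ 2)
      ((6 * x ^ 2 - 2) / (1 + x ^ 2) ^ 3) x := by
  have hnum : HasDerivAt (fun x : 𝕜 => -2 * x) (-2) x := by
    simpa using (hasDerivAt_id x).const_mul (-2 : 𝕜)
  have hden : HasDerivAt (fun x : 𝕜 => (1 + x ^ 2) ^ 2) (2 * (1 + x ^ 2) * (2 * x)) x := by
    simpa using ((hasDerivAt_pow 2 x).const_add 1).fun_pow 2
  refine (hnum.fun_div hden (pow_ne_zero 2 hx)).congr_deriv ?_
  field_simp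
  ring

theorem deriv_one_div_one_add_sq (hx : 1 + x ^ 2 ≠ 0) :
    deriv (fun x : 𝕜 => 1 / (1 + x ^ 2)) x = -2 * x / (1 + x ^ 2) ^ 2 :=
  (hasDerivAt_one_div_one_add_sq hx).deriv

theorem deriv_deriv_one_div_one_add_sq (hx : 1 + x ^ 2 ≠ 0) :
    deriv (deriv fun x : 𝕜 => 1 / (1 + x ^ 2)) x = (6 * x ^ 2 - 2) / (1 + x ^ 2) ^ 3 := by
  have hopen : IsOpen {y : 𝕜 | 1 + y ^ 2 ≠ 0} :=
    isOpen_ne_fun (by fun_prop) continuous_const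
  have hderiv : deriv (fun x : 𝕜 => 1 / (1 + x ^ 2)) =ᶠ[nhds x]
      fun x => -2 * x / (1 + x ^ 2) ^ 2 := by
    filter_upwards [hopen.mem_nhds hx] with y hy using deriv_one_div_one_add_sq hy
  rw [hderiv.deriv_eq]
  exact (hasDerivAt_neg_two_mul_div_one_add_sq_sq hx).deriv

end OneDivOneAddSq

theorem one_add_sq_eq_mul (x : ℂ) : 1 + x ^ 2 = (x - I) * (x + I) := by
  linear_combination I_sq

theorem sub_I_pow_three_mul_eq {x : ℂ} (μ : ℂ) (hI : x ≠ I) (hnegI : x ≠ -I) :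
    (x - I) ^ 3 * (μ * ((6 * x ^ 2 - 2) / (1 + x ^ 2) ^ 3)
        - 1 / (1 + x ^ 2) * (-2 * x / (1 + x ^ 2) ^ 2)) =
      (μ * (6 * x ^ 2 - 2) + 2 * x) / (x + I) ^ 3 := by
  have hsub : x - I ≠ 0 := sub_ne_zero.mpr hI
  have hadd : x + I ≠ 0 := fun h => hnegI (eq_neg_of_add_eq_zero_left h)
  rw [one_add_sq_eq_mul]
  field_simp
  ring

/-- `u1 = μ·u0'' - u0·u0'` has a pole of order 3 at `x = i` with leading
coefficient `-1/4 - iμ`: `(x - i)^3 · u1(x) → -1/4 - iμ` as `x → i`. -/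
theorem stmt_2 (μ : ℂ) (u0 u1 : ℂ → ℂ) (hu0 : ∀ x : ℂ, u0 x = 1 / (1 + x ^ 2))
    (hu1 : ∀ x : ℂ, u1 x = μ * deriv (deriv u0) x - u0 x * deriv u0 x) :
    Tendsto (fun x => (x - I) ^ 3 * u1 x) (nhdsWithin I {I}ᶜ)
      (nhds (-1 / 4 - I * μ)) := by
  obtain rfl : u0 = fun x : ℂ => 1 / (1 + x ^ 2) := funext hu0
  have hI_add_I : I + I ≠ 0 := by simp [Complex.ext_iff]
  have hev : (fun x : ℂ => (μ * (6 * x ^ 2 - 2) + 2 * x) / (x + I) ^ 3)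
      =ᶠ[nhdsWithin I {I}ᶜ] fun x => (x - I) ^ 3 * u1 x := by
    have hnegI : ∀ᶠ x in nhdsWithin I {I}ᶜ, x ≠ -I :=
      eventually_nhdsWithin_of_eventually_nhds (eventually_ne_nhds (by norm_num [Complex.ext_iff]))
    filter_upwards [hnegI, self_mem_nhdsWithin] with x hx hxI
    have hx2 : 1 + x ^ 2 ≠ 0 := by
      rw [one_add_sq_eq_mul]
      exact mul_ne_zero (sub_ne_zero.mpr hxI) fun h => hx (eq_neg_of_add_eq_zero_left h)
    rw [hu1, deriv_deriv_one_div_one_add_sq hx2, deriv_one_div_one_add_sq hx2,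
      sub_I_pow_three_mul_eq μ hxI hx]
  have hval : (μ * (6 * I ^ 2 - 2) + 2 * I) / (I + I) ^ 3 = -1 / 4 - I * μ := by
    rw [div_eq_iff (pow_ne_zero 3 hI_add_I)]
    linear_combination (6 * μ + 2 * I + 8 * μ * (I ^ 2 - 1)) * I_sq
  have hcont : ContinuousAt (fun x : ℂ => (μ * (6 * x ^ 2 - 2) + 2 * x) / (x + I) ^ 3) I := by
    fun_prop (disch := exact pow_ne_zero 3 hI_add_I)
  rw [← hval]
  exact (hcont.tendsto.mono_left nhdsWithin_le_nhds).congr' hev
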